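/- For the metric ds² = dη² + du² + α² sin²η dξ₁² + cos²η dξ₂² (α > 0 constant, 0 < η < π/2), the torus surfaces of constant (η,u) with unit normals n = ∂_η, m = ∂_u have second fundamental forms satisfying K² − K_{ab}K^{ab} = −2 and L_{ab} = 0; in particular this quantity is independent of the cone parameter α. -/

import Mathlib

noncomputable section

open Real

/-- Diagonal entries of the conical metric
`ds² = dη² + du² + α² sin²η dξ₁² + cos²η dξ₂²` in the coordinates
`x⁰ = η, x¹ = u, x² = ξ₁, x³ = ξ₂`. -/
def diagEntry (α : ℝ) : Fin 4 → ℝ → ℝ :=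
  ![fun _ => 1, fun _ => 1, fun η => α ^ 2 * Real.sin η ^ 2, fun η => Real.cos η ^ 2]

/-- Metric components `g_{ab}` (diagonal, depending only on `η`). -/
def metricComp (α : ℝ) (a b : Fin 4) : ℝ → ℝ :=
  if a = b then diagEntry α a else fun _ => 0

/-- Partial derivative `∂ᵢ` acting on functions of `η = x⁰` alone. -/
def Dpart (i : Fin 4) (h : ℝ → ℝ) : ℝ → ℝ :=
  if i = 0 then deriv h else fun _ => 0

/-- Christoffel symbols of the diagonal metric. -/
def Gamma (α : ℝ) (k i j : Fin 4) (η : ℝ) : ℝ :=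
  (1 / 2) * (diagEntry α k η)⁻¹ *
    (Dpart i (metricComp α j k) η + Dpart j (metricComp α i k) η
      - Dpart k (metricComp α i j) η)

/-- Second fundamental form of the torus `{η = const, u = const}` with respect to the
constant unit normal `∂/∂x^c` (`c = 0` gives `n = ∂_η`, `c = 1` gives `m = ∂_u`):
`K_{ab} = ⟨∇_{∂_a} ∂_c, ∂_b⟩ = Γᵏ_{a c} g_{kb}`. -/
def secondFF (α : ℝ) (c a b : Fin 4) (η : ℝ) : ℝ :=
  ∑ k : Fin 4, Gamma α k a c η * metricComp α k b η

/-- Inverse of the induced metric on the torus (supported on the tangent indices 2, 3). -/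
def hUp (α : ℝ) (a b : Fin 4) (η : ℝ) : ℝ :=
  if a = b ∧ (a = 2 ∨ a = 3) then (diagEntry α a η)⁻¹ else 0

/-- Mean curvature `K = h^{ab} K_{ab}` with respect to the normal `∂/∂x^c`. -/
def meanCurv (α : ℝ) (c : Fin 4) (η : ℝ) : ℝ :=
  ∑ a : Fin 4, ∑ b : Fin 4, hUp α a b η * secondFF α c a b η

/-!
In the coordinates `(η, u, ξ₁, ξ₂)` the metric is diagonal and depends on `η` alone, and `∂_u`
is a flat direction, so the Christoffel symbols `Γᵏ_{a u}` vanish (`L_{ab} = 0`) while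
`K_{ab} = ½ ∂_η g_{ab}`. On the torus `K^a_b` is diagonal with principal curvatures
`cot η` (along `ξ₁`) and `-tan η` (along `ξ₂`), so `K² - K_{ab}K^{ab}` is twice their product, `-2`.
-/

lemma deriv_diagEntry_two (α η : ℝ) :
    deriv (diagEntry α 2) η = α ^ 2 * (2 * sin η * cos η) := by
  change deriv (fun η => α ^ 2 * sin η ^ 2) η = _
  simp

lemma deriv_diagEntry_three (α η : ℝ) :
    deriv (diagEntry α 3) η = -(2 * sin η * cos η) := by
  change deriv (fun η => cos η ^ 2) η = _
  simp
  ring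

lemma metricComp_comm (α : ℝ) (a b : Fin 4) : metricComp α a b = metricComp α b a := by
  by_cases h : a = b
  · rw [h]
  · simp [metricComp, h, Ne.symm h]

lemma Dpart_of_ne_zero {i : Fin 4} (hi : i ≠ 0) (h : ℝ → ℝ) : Dpart i h = fun _ => 0 := by
  simp [Dpart, hi]

lemma Dpart_metricComp_of_le_one (α : ℝ) {a : Fin 4} (ha : a ≤ 1) (i k : Fin 4) :
    Dpart i (metricComp α a k) = fun _ => 0 := by
  by_cases hi : i = 0
  · subst hi
    fin_cases a <;> fin_cases k <;> simp_all [Dpart, metricComp, diagEntry]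
  · exact Dpart_of_ne_zero hi _

lemma Gamma_right_one (α : ℝ) (k a : Fin 4) (η : ℝ) : _root_.Gamma α k a 1 η = 0 := by
  simp [_root_.Gamma, Dpart_metricComp_of_le_one α (le_refl (1 : Fin 4)), metricComp_comm α a 1,
    Dpart_of_ne_zero (one_ne_zero : (1 : Fin 4) ≠ 0)]

lemma Gamma_right_zero (α : ℝ) (k a : Fin 4) (η : ℝ) :
    _root_.Gamma α k a 0 η = (1 / 2) * (diagEntry α k η)⁻¹ * deriv (metricComp α a k) η := by
  have h0 : (0 : Fin 4) ≤ 1 := by decide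
  rw [_root_.Gamma, Dpart_metricComp_of_le_one α h0, metricComp_comm α a 0,
    Dpart_metricComp_of_le_one α h0, Dpart, if_pos rfl]
  ring

lemma secondFF_right_one (α : ℝ) (a b : Fin 4) (η : ℝ) : secondFF α 1 a b η = 0 := by
  simp [secondFF, Gamma_right_one]

lemma secondFF_right_zero {α η : ℝ} (a : Fin 4) {b : Fin 4} (hb : diagEntry α b η ≠ 0) :
    secondFF α 0 a b η = deriv (metricComp α a b) η / 2 := by
  rw [secondFF, Fintype.sum_eq_single b fun k hk => by simp [metricComp, hk]]
  simp only [Gamma_right_zero, metricComp, if_true]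
  field_simp

lemma secondFF_zero_of_ne {α η : ℝ} {a b : Fin 4} (hab : a ≠ b) (hb : diagEntry α b η ≠ 0) :
    secondFF α 0 a b η = 0 := by
  simp [secondFF_right_zero a hb, metricComp, hab]

lemma diagEntry_two_ne_zero {α η : ℝ} (hα : α ≠ 0) (hs : sin η ≠ 0) : diagEntry α 2 η ≠ 0 := by
  simp [diagEntry, hα, hs]

lemma diagEntry_three_ne_zero (α : ℝ) {η : ℝ} (hc : cos η ≠ 0) : diagEntry α 3 η ≠ 0 := by
  simp [diagEntry, hc]

lemma hUp_mul_secondFF_two_two {α η : ℝ} (hα : α ≠ 0) (hs : sin η ≠ 0) :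
    hUp α 2 2 η * secondFF α 0 2 2 η = cos η / sin η := by
  rw [secondFF_right_zero 2 (diagEntry_two_ne_zero hα hs)]
  rw [hUp, if_pos (by decide), metricComp, if_pos rfl, deriv_diagEntry_two]
  change (α ^ 2 * sin η ^ 2)⁻¹ * _ = _
  field_simp

lemma hUp_mul_secondFF_three_three (α : ℝ) {η : ℝ} (hc : cos η ≠ 0) :
    hUp α 3 3 η * secondFF α 0 3 3 η = -(sin η / cos η) := by
  rw [secondFF_right_zero 3 (diagEntry_three_ne_zero α hc)]
  rw [hUp, if_pos (by decide), metricComp, if_pos rfl, deriv_diagEntry_three]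
  change (cos η ^ 2)⁻¹ * _ = _
  field_simp

lemma sum_hUp_mul (α η : ℝ) (K : Fin 4 → Fin 4 → ℝ) :
    ∑ a : Fin 4, ∑ b : Fin 4, hUp α a b η * K a b = hUp α 2 2 η * K 2 2 + hUp α 3 3 η * K 3 3 := by
  simp [Fin.sum_univ_four, hUp]

lemma sum_hUp_mul_hUp_mul (α η : ℝ) (K : Fin 4 → Fin 4 → ℝ) :
    ∑ a : Fin 4, ∑ b : Fin 4, ∑ c : Fin 4, ∑ d : Fin 4, hUp α a c η * hUp α b d η * K a b * K c d
      = (hUp α 2 2 η * K 2 2) ^ 2 + (hUp α 3 3 η * K 3 3) ^ 2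
        + hUp α 2 2 η * hUp α 3 3 η * (K 2 3 ^ 2 + K 3 2 ^ 2) := by
  simp [Fin.sum_univ_four, hUp]
  ring

/-- For the metric `ds² = dη² + du² + α² sin²η dξ₁² + cos²η dξ₂²` (`α > 0` constant,
`0 < η < π/2`), the torus surfaces of constant `(η,u)` with unit normals `n = ∂_η`,
`m = ∂_u` satisfy `K² − K_{ab}K^{ab} = −2` and `L_{ab} = 0`; in particular this quantity
is independent of the cone parameter `α`. -/
theorem stmt_19 (α : ℝ) (hα : 0 < α) :
    ∀ η ∈ Set.Ioo 0 (π / 2),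
      (meanCurv α 0 η ^ 2 -
        ∑ a : Fin 4, ∑ b : Fin 4, ∑ c : Fin 4, ∑ d : Fin 4,
          hUp α a c η * hUp α b d η * secondFF α 0 a b η * secondFF α 0 c d η) = -2 ∧
      (∀ a b : Fin 4, secondFF α 1 a b η = 0) := by
  rintro η ⟨hη₀, hη₁⟩
  have hs : sin η ≠ 0 := (sin_pos_of_pos_of_lt_pi hη₀ (by linarith [pi_pos])).ne'
  have hc : cos η ≠ 0 := (cos_pos_of_mem_Ioo ⟨by linarith [pi_pos], hη₁⟩).ne'
  refine ⟨?_, fun a b => secondFF_right_one α a b η⟩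
  rw [meanCurv, sum_hUp_mul, sum_hUp_mul_hUp_mul (K := fun a b => secondFF α 0 a b η),
    secondFF_zero_of_ne (by decide : (2 : Fin 4) ≠ 3) (diagEntry_three_ne_zero α hc),
    secondFF_zero_of_ne (by decide : (3 : Fin 4) ≠ 2) (diagEntry_two_ne_zero hα.ne' hs),
    hUp_mul_secondFF_two_two hα.ne' hs, hUp_mul_secondFF_three_three α hc]
  field_simp
  ring
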